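/- arXiv:1710.00910 — 4 statements merged into one kernel-verified Lean document; each statement's English description precedes it below -/
import Mathlib

section
/- Let α be a quantum channel whose dimension d(α) is a value in the Jones discrete series, i.e. d(α) ∈ {2cos(π/n) : n ≥ 3} ∪ [2,∞), and let β > 0. Define the free energy F_α = −β⁻¹ log d(α). If F_α ≠ 0 then −F_α ≥ (1/2) β⁻¹ log 2. -/
/-- Lower bound for the incremental free energy of an irreversible quantum channel:
if the dimension `d` of the channel lies in the Jones spectrum
`{2 cos(π/n) : n ≥ 3} ∪ [2, ∞)`, `β > 0` is the inverse temperature and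
`F = -β⁻¹ log d` is the free energy, then `F ≠ 0` implies `-F ≥ (1/2) β⁻¹ log 2`. -/
theorem free_energy_lower_bound (d β F : ℝ) (hβ : 0 < β)
    (hmem : d ∈ {x : ℝ | ∃ n : ℕ, 3 ≤ n ∧ x = 2 * Real.cos (Real.pi / n)} ∪ Set.Ici (2 : ℝ))
    (hF : F = -β⁻¹ * Real.log d) (hFne : F ≠ 0) :
    (1 / 2) * β⁻¹ * Real.log 2 ≤ -F := by
  have hlog : Real.log d ≠ 0 := by
    intro h
    exact hFne (by rw [hF, h, mul_zero])
  have hs2 : Real.sqrt 2 ≤ 2 := by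
    nlinarith [Real.sq_sqrt (by norm_num : (2:ℝ) ≥ 0), Real.sqrt_nonneg 2]
  have hd : Real.sqrt 2 ≤ d := by
    rcases hmem with ⟨n, hn, rfl⟩ | h2
    · rcases eq_or_lt_of_le hn with h3 | h4
      · exfalso
        apply hlog
        rw [← h3]
        norm_num [Real.cos_pi_div_three]
      · have hn4 : (4:ℕ) ≤ n := h4
        have hcos : Real.cos (Real.pi / 4) ≤ Real.cos (Real.pi / n) := by
          apply Real.cos_le_cos_of_nonneg_of_le_pi
          · positivity
          · linarith [Real.pi_pos]
          · apply div_le_div_of_nonneg_left Real.pi_pos.le (by norm_num)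
            exact_mod_cast hn4
        rw [Real.cos_pi_div_four] at hcos
        linarith
    · exact le_trans hs2 h2
  have hlogd : (1/2) * Real.log 2 ≤ Real.log d := by
    have h1 : Real.log (Real.sqrt 2) = Real.log 2 / 2 := Real.log_sqrt (by norm_num)
    have h2 : Real.log (Real.sqrt 2) ≤ Real.log d :=
      Real.log_le_log (Real.sqrt_pos.mpr (by norm_num)) hd
    linarith
  rw [hF]
  have hβi : 0 < β⁻¹ := inv_pos.mpr hβ
  nlinarith [mul_le_mul_of_nonneg_left hlogd hβi.le]
end

section
/- Let ρ be an endomorphism of B(H) for a separable infinite-dimensional Hilbert space H, i.e. a normal unital *-homomorphism B(H) → B(H). Then ρ is inner in the sense that there exists a (finite or countable) family of isometries v_i ∈ B(H) with mutually orthogonal ranges satisfying Σ_i v_i v_i* = 1 such that ρ(x) = Σ_i v_i x v_i* for all x ∈ B(H). -/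
/-!
Fix a unit vector `e`; then `P = ρ(|e⟩⟨e|)` is a projection, and we choose a Hilbert basis `F`
of its range. Since `ρ(|η⟩⟨e|)* ρ(|η'⟩⟨e|) = ⟪η, η'⟫ P`, the maps `V j : η ↦ ρ(|η⟩⟨e|) (F j)` are
isometries with mutually orthogonal ranges, and `ρ(x) V j = V j x` because
`x |η⟩⟨e| = |x η⟩⟨e|`. A vector `ξ` orthogonal to all these ranges satisfies `ρ(|e⟩⟨η|) ξ = 0`
(this vector lies in the range of `P` and is orthogonal to every `F j`), hence
`ρ(|η⟩⟨η|) ξ = 0` for all `η`. The finite partial sums of `Σ |b i⟩⟨b i|` over a Hilbert basis `b`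
lie in the unit ball and converge weakly to `1`, so normality gives `ξ = ρ(1) ξ = 0`.
Therefore `Σ V j V j* = 1`, and applying `ρ(x)` yields `ρ(x) = Σ V j x V j*`. Separability of `H`
makes the family countable.
-/

open scoped InnerProductSpace
open InnerProductSpace ContinuousLinearMap Filter Topology

section Orthonormal

variable {𝕜 E ι : Type*} [RCLike 𝕜] [NormedAddCommGroup E] [InnerProductSpace 𝕜 E]

theorem Orthonormal.countable [TopologicalSpace.SeparableSpace E] {v : ι → E}
    (hv : Orthonormal 𝕜 v) : Countable ι := by
  refine Pairwise.countable_of_isOpen_disjoint (s := fun i => Metric.ball (v i) (1 / 2))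
    (fun i j hij => Metric.ball_disjoint_ball ?_) (fun _ => Metric.isOpen_ball)
    (fun _ => Metric.nonempty_ball.2 one_half_pos)
  have hdist : dist (v i) (v j) ^ 2 = 2 := by
    rw [dist_eq_norm, @norm_sub_sq 𝕜, hv.norm_eq_one, hv.norm_eq_one, hv.inner_eq_zero hij]
    norm_num
  nlinarith [dist_nonneg (x := v i) (y := v j)]

theorem Orthonormal.norm_sum_rankOne_self_le {v : ι → E} (hv : Orthonormal 𝕜 v) (s : Finset ι) :
    ‖∑ i ∈ s, rankOne 𝕜 (v i) (v i)‖ ≤ 1 := by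
  refine opNorm_le_bound _ zero_le_one fun x => ?_
  have hpyth := hv.orthogonalFamily.norm_sum (fun i => ⟪v i, x⟫_𝕜) s
  have hbessel := hv.sum_inner_products_le x (s := s)
  simp only [LinearIsometry.toSpanSingleton_apply] at hpyth
  rw [one_mul, ← pow_le_pow_iff_left₀ (norm_nonneg _) (norm_nonneg _) two_ne_zero]
  simpa [sum_apply, hpyth] using hbessel

theorem HilbertBasis.hasSum_rankOne_self_apply (b : HilbertBasis ι 𝕜 E) (x : E) :
    HasSum (fun i => rankOne 𝕜 (b i) (b i) x) x := by
  simpa [b.repr_apply_apply] using b.hasSum_repr x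

theorem HilbertBasis.eq_zero_of_forall_inner_eq_zero (b : HilbertBasis ι 𝕜 E)
    {x : E} (hx : ∀ i, ⟪b i, x⟫_𝕜 = 0) : x = 0 := by
  have hsum : HasSum (fun _ : ι => (0 : E)) x := by
    simpa [b.repr_apply_apply, hx] using b.hasSum_repr x
  exact hsum.unique hasSum_zero

end Orthonormal

section HilbertSum

variable {𝕜 ι H H' : Type*} [RCLike 𝕜] [NormedAddCommGroup H] [InnerProductSpace 𝕜 H]
  [CompleteSpace H] [NormedAddCommGroup H'] [InnerProductSpace 𝕜 H'] [CompleteSpace H']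

theorem OrthogonalFamily.adjoint_apply_apply {V : ι → H →ₗᵢ[𝕜] H'}
    (hV : OrthogonalFamily 𝕜 (fun _ => H) V) [DecidableEq ι] (i j : ι) (η : H) :
    adjoint (V i).toContinuousLinearMap (V j η) = if j = i then η else 0 := by
  split_ifs with hji
  · subst hji
    exact congr($((V j).adjoint_comp_self) η)
  · refine ext_inner_left 𝕜 fun ζ => ?_
    rw [adjoint_inner_right, inner_zero_right]
    exact hV (Ne.symm hji) ζ η

theorem OrthogonalFamily.hasSum_apply_adjoint_apply {V : ι → H →ₗᵢ[𝕜] H'}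
    (hV : OrthogonalFamily 𝕜 (fun _ => H) V) (htotal : ∀ ξ, (∀ i η, ⟪V i η, ξ⟫_𝕜 = 0) → ξ = 0)
    (ξ : H') : HasSum (fun i => V i (adjoint (V i).toContinuousLinearMap ξ)) ξ := by
  classical
  have hsum : IsHilbertSum 𝕜 (fun _ => H) V := by
    refine IsHilbertSum.mk hV ?_
    rw [top_le_iff, Submodule.topologicalClosure_eq_top_iff, Submodule.eq_bot_iff]
    exact fun ζ hζ => htotal ζ fun i η =>
      (Submodule.mem_orthogonal _ _).1 hζ _ (Submodule.mem_iSup_of_mem i ⟨η, rfl⟩)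
  set w := hsum.linearIsometryEquiv ξ
  have hw := hsum.hasSum_linearIsometryEquiv_symm w
  rw [LinearIsometryEquiv.symm_apply_apply] at hw
  convert hw using 3 with i
  have hcoord := hw.mapL (adjoint (V i).toContinuousLinearMap)
  simp only [hV.adjoint_apply_apply] at hcoord
  exact (hcoord.unique (hasSum_single i fun k hk => if_neg hk)).trans (if_pos rfl)

end HilbertSum

section Normal

variable {𝕜 H H' : Type*} [RCLike 𝕜] [NormedAddCommGroup H] [InnerProductSpace 𝕜 H]
  [NormedAddCommGroup H'] [InnerProductSpace 𝕜 H']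

def WOTContinuousOnUnitBall (ρ : (H →L[𝕜] H) → (H' →L[𝕜] H')) : Prop :=
  ContinuousOn (fun x : H →WOT[𝕜] H => ContinuousLinearMapWOT.ofCLM (ρ x.toCLM))
    {x | ‖x.toCLM‖ ≤ 1}

variable [CompleteSpace H] [CompleteSpace H']

theorem WOTContinuousOnUnitBall.tendsto_inner_apply {ρ : (H →L[𝕜] H) → (H' →L[𝕜] H')}
    (hρ : WOTContinuousOnUnitBall ρ) {α : Type*} {l : Filter α} {T : α → H →L[𝕜] H}
    {A : H →L[𝕜] H} (hT : ∀ a, ‖T a‖ ≤ 1) (hA : ‖A‖ ≤ 1)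
    (hTA : ∀ x, Tendsto (fun a => T a x) l (𝓝 (A x))) (x y : H') :
    Tendsto (fun a => ⟪y, ρ (T a) x⟫_𝕜) l (𝓝 ⟪y, ρ A x⟫_𝕜) := by
  have hWOT : Tendsto (fun a => ContinuousLinearMapWOT.ofCLM (T a)) l
      (𝓝[{x | ‖x.toCLM‖ ≤ 1}] ContinuousLinearMapWOT.ofCLM A) := by
    refine tendsto_nhdsWithin_iff.2 ⟨?_, Eventually.of_forall hT⟩
    exact ContinuousLinearMapWOT.tendsto_iff_forall_inner_apply_tendsto.2 fun x y =>
      ((continuous_const.inner continuous_id).tendsto _).comp (hTA x)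
  exact ContinuousLinearMapWOT.tendsto_iff_forall_inner_apply_tendsto.1
    ((hρ _ hA).tendsto.comp hWOT) x y

theorem WOTContinuousOnUnitBall.eq_zero_of_forall_map_rankOne_self_apply_eq_zero {F : Type*}
    [FunLike F (H →L[𝕜] H) (H' →L[𝕜] H')] [AlgHomClass F 𝕜 (H →L[𝕜] H) (H' →L[𝕜] H')]
    {ρ : F} (hρ : WOTContinuousOnUnitBall ρ) {ξ : H'} (hξ : ∀ η, ρ (rankOne 𝕜 η η) ξ = 0) :
    ξ = 0 := by
  obtain ⟨w, b, -⟩ := exists_hilbertBasis 𝕜 H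
  have hlim := hρ.tendsto_inner_apply (l := atTop) (A := 1)
    (T := fun s : Finset w => ∑ i ∈ s, rankOne 𝕜 (b i) (b i))
    b.orthonormal.norm_sum_rankOne_self_le norm_id_le
    (fun x => by simp only [sum_apply, one_apply_eq_self]; exact
      b.hasSum_rankOne_self_apply x) ξ ξ
  simp only [map_sum, sum_apply, hξ, Finset.sum_const_zero, inner_zero_right, map_one,
    one_apply_eq_self] at hlim
  exact inner_self_eq_zero.1 (tendsto_nhds_unique hlim tendsto_const_nhds)

end Normal

namespace StarAlgHom

variable {𝕜 H H' : Type*} [RCLike 𝕜] [NormedAddCommGroup H] [InnerProductSpace 𝕜 H]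
  [CompleteSpace H] [NormedAddCommGroup H'] [InnerProductSpace 𝕜 H'] [CompleteSpace H']
  (ρ : (H →L[𝕜] H) →⋆ₐ[𝕜] (H' →L[𝕜] H'))

noncomputable def rankOneApply (e : H) (χ : H') : H →ₗ[𝕜] H' where
  toFun η := ρ (rankOne 𝕜 η e) χ
  map_add' η η' := by simp only [map_add, add_apply]
  map_smul' c η := by simp only [map_smul, smul_apply, RingHom.id_apply]

@[simp]
theorem rankOneApply_apply (e : H) (χ : H') (η : H) :
    ρ.rankOneApply e χ η = ρ (rankOne 𝕜 η e) χ := rfl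

theorem map_apply_rankOneApply (x : H →L[𝕜] H) (e : H) (χ : H') (η : H) :
    ρ x (ρ.rankOneApply e χ η) = ρ.rankOneApply e χ (x η) := by
  rw [rankOneApply_apply, rankOneApply_apply, ← mul_apply_eq_comp, ← map_mul, mul_def,
    comp_rankOne]

theorem map_rankOne_self_mul_map_rankOne {e : H} (he : ‖e‖ = 1) (η : H) :
    ρ (rankOne 𝕜 e e) * ρ (rankOne 𝕜 e η) = ρ (rankOne 𝕜 e η) := by
  rw [← map_mul, mul_def, rankOne_comp_rankOne, inner_self_eq_norm_sq_to_K, he]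
  simp

theorem map_rankOne_mul_map_rankOne {e : H} (he : ‖e‖ = 1) (η : H) :
    ρ (rankOne 𝕜 η e) * ρ (rankOne 𝕜 e η) = ρ (rankOne 𝕜 η η) := by
  rw [← map_mul, mul_def, rankOne_comp_rankOne, inner_self_eq_norm_sq_to_K, he]
  simp

theorem inner_rankOneApply_left (e : H) (χ ξ : H') (η : H) :
    ⟪ρ.rankOneApply e χ η, ξ⟫_𝕜 = ⟪χ, ρ (rankOne 𝕜 e η) ξ⟫_𝕜 := by
  rw [rankOneApply_apply, ← adjoint_inner_right, ← star_eq_adjoint, ← map_star, star_eq_adjoint,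
    adjoint_rankOne]

theorem inner_rankOneApply_rankOneApply (e : H) (χ χ' : H') (η η' : H) :
    ⟪ρ.rankOneApply e χ η, ρ.rankOneApply e χ' η'⟫_𝕜 =
      ⟪η, η'⟫_𝕜 * ⟪χ, ρ (rankOne 𝕜 e e) χ'⟫_𝕜 := by
  rw [inner_rankOneApply_left, rankOneApply_apply, ← mul_apply_eq_comp, ← map_mul, mul_def,
    rankOne_comp_rankOne, map_smul, smul_apply, inner_smul_right]

theorem eq_zero_of_forall_inner_rankOneApply_eq_zero (hρ : WOTContinuousOnUnitBall ρ) {e : H}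
    (he : ‖e‖ = 1) {ι : Type*} (f : HilbertBasis ι 𝕜 (ρ (rankOne 𝕜 e e)).range) {ξ : H'}
    (hξ : ∀ j η, ⟪ρ.rankOneApply e (f j) η, ξ⟫_𝕜 = 0) : ξ = 0 := by
  refine hρ.eq_zero_of_forall_map_rankOne_self_apply_eq_zero fun η => ?_
  have hrange : ρ (rankOne 𝕜 e η) ξ ∈ (ρ (rankOne 𝕜 e e)).range :=
    ⟨_, by rw [coe_coe, ← mul_apply_eq_comp, map_rankOne_self_mul_map_rankOne ρ he]⟩
  have hzero : (⟨_, hrange⟩ : (ρ (rankOne 𝕜 e e)).range) = 0 :=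
    f.eq_zero_of_forall_inner_eq_zero fun j => by
      rw [Submodule.coe_inner, ← inner_rankOneApply_left]
      exact hξ j η
  rw [← map_rankOne_mul_map_rankOne ρ he, mul_apply_eq_comp, (Submodule.mk_eq_zero _ _).1 hzero,
    map_zero]

theorem exists_isometries_of_wotContinuousOnUnitBall [TopologicalSpace.SeparableSpace H']
    (hρ : WOTContinuousOnUnitBall ρ) {e : H} (he : ‖e‖ = 1) :
    ∃ (ι : Type) (_ : Countable ι) (V : ι → H →ₗᵢ[𝕜] H'),
      OrthogonalFamily 𝕜 (fun _ => H) V ∧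
      (∀ ξ, HasSum (fun i => V i (adjoint (V i).toContinuousLinearMap ξ)) ξ) ∧
      ∀ x i η, ρ x (V i η) = V i (x η) := by
  set P := ρ (rankOne 𝕜 e e)
  have hP : IsIdempotentElem P := ((isStarProjection_rankOne_self he).map ρ).isIdempotentElem
  set K := P.range
  have : CompleteSpace K := hP.isClosed_range.completeSpace_coe
  obtain ⟨w, f, -⟩ := exists_hilbertBasis 𝕜 K
  set F : w → H' := fun j => f j
  have hF : Orthonormal 𝕜 F := f.orthonormal.comp_linearIsometry K.subtypeₗᵢ
  have hPF (j : w) : P (F j) = F j :=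
    (LinearMap.IsIdempotentElem.mem_range_iff hP.toLinearMap).1 (f j).2
  have hinner (j k : w) (η η' : H) :
      ⟪ρ.rankOneApply e (F j) η, ρ.rankOneApply e (F k) η'⟫_𝕜 = ⟪F j, F k⟫_𝕜 * ⟪η, η'⟫_𝕜 := by
    rw [inner_rankOneApply_rankOneApply, hPF, mul_comm]
  let V (j : w) : H →ₗᵢ[𝕜] H' := (ρ.rankOneApply e (F j)).isometryOfInner fun η η' => by
    rw [hinner, inner_self_eq_norm_sq_to_K, hF.1 j]
    simp
  have hV : OrthogonalFamily 𝕜 (fun _ => H) V := fun j k hjk η η' =>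
    (hinner j k η η').trans (by rw [hF.inner_eq_zero hjk, zero_mul])
  have : Countable w := hF.countable
  let σ := (equivShrink.{0} w).symm
  refine ⟨Shrink w, .of_equiv _ σ.symm, fun i => V (σ i), hV.comp σ.injective, fun ξ => ?_,
    fun x i η => ρ.map_apply_rankOneApply x e (F (σ i)) η⟩
  exact (σ.hasSum_iff (f := fun j => V j (adjoint (V j).toContinuousLinearMap ξ))).2
    (hV.hasSum_apply_adjoint_apply
      (fun _ hξ => ρ.eq_zero_of_forall_inner_rankOneApply_eq_zero hρ he f hξ) ξ)

end StarAlgHom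

theorem endomorphism_of_BH_is_inner_general {H : Type*} [NormedAddCommGroup H]
    [InnerProductSpace ℂ H] [CompleteSpace H] [TopologicalSpace.SeparableSpace H]
    (ρ : (H →L[ℂ] H) →⋆ₐ[ℂ] (H →L[ℂ] H))
    (hnormal : ContinuousOn
      (fun x : ContinuousLinearMapWOT (RingHom.id ℂ) H H =>
        (ContinuousLinearMapWOT.linearEquiv (E := H) (F := H) (σ := RingHom.id ℂ) ℂ).symm (ρ (((ContinuousLinearMapWOT.linearEquiv (E := H) (F := H) (σ := RingHom.id ℂ) ℂ).symm).symm x)))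
      {x : ContinuousLinearMapWOT (RingHom.id ℂ) H H | ‖((ContinuousLinearMapWOT.linearEquiv (E := H) (F := H) (σ := RingHom.id ℂ) ℂ).symm).symm x‖ ≤ 1}) :
    ∃ (ι : Type) (_ : Countable ι) (v : ι → H →L[ℂ] H),
      (∀ i, star (v i) * v i = 1) ∧
      (∀ i j, i ≠ j → star (v i) * v j = 0) ∧
      (∀ ξ : H, HasSum (fun i => v i (star (v i) ξ)) ξ) ∧
      (∀ (x : H →L[ℂ] H) (ξ : H), HasSum (fun i => v i (x (star (v i) ξ))) (ρ x ξ)) := by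
  classical
  rcases subsingleton_or_nontrivial H with hH | hH
  · exact ⟨Empty, inferInstance, Empty.elim, fun i => i.elim, fun i => i.elim,
      fun ξ => Subsingleton.elim 0 ξ ▸ hasSum_empty,
      fun x ξ => Subsingleton.elim 0 (ρ x ξ) ▸ hasSum_empty⟩
  obtain ⟨e, he⟩ := exists_norm_eq H zero_le_one
  obtain ⟨ι, hι, V, hV, hsum, hρV⟩ := ρ.exists_isometries_of_wotContinuousOnUnitBall hnormal he
  refine ⟨ι, hι, fun i => (V i).toContinuousLinearMap, fun i => (V i).adjoint_comp_self,
    fun i j hij => ?_, hsum, fun x ξ => ?_⟩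
  · ext η
    exact hV.adjoint_apply_apply i j η ▸ if_neg hij.symm
  · simpa only [hρV, star_eq_adjoint, LinearIsometry.coe_toContinuousLinearMap] using
      (hsum ξ).mapL (ρ x)

/-- Every normal unital *-endomorphism of `B(H)`, for `H` a separable infinite-dimensional
Hilbert space, is inner: it is of the form `ρ(x) = Σ_i v_i x v_i*` for a countable family of
isometries `v_i` with mutually orthogonal ranges and `Σ_i v_i v_i* = 1` (sums in the strong
operator topology). Normality is encoded as continuity, with respect to the weak operator
topology, on the closed unit ball. -/
theorem endomorphism_of_BH_is_inner {H : Type*} [NormedAddCommGroup H]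
    [InnerProductSpace ℂ H] [CompleteSpace H] [TopologicalSpace.SeparableSpace H]
    (hinf : ¬ FiniteDimensional ℂ H)
    (ρ : (H →L[ℂ] H) →⋆ₐ[ℂ] (H →L[ℂ] H))
    (hnormal : ContinuousOn
      (fun x : ContinuousLinearMapWOT (RingHom.id ℂ) H H =>
        (ContinuousLinearMapWOT.linearEquiv (E := H) (F := H) (σ := RingHom.id ℂ) ℂ).symm (ρ (((ContinuousLinearMapWOT.linearEquiv (E := H) (F := H) (σ := RingHom.id ℂ) ℂ).symm).symm x)))
      {x : ContinuousLinearMapWOT (RingHom.id ℂ) H H | ‖((ContinuousLinearMapWOT.linearEquiv (E := H) (F := H) (σ := RingHom.id ℂ) ℂ).symm).symm x‖ ≤ 1}) :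
    ∃ (ι : Type) (_ : Countable ι) (v : ι → H →L[ℂ] H),
      (∀ i, star (v i) * v i = 1) ∧
      (∀ i j, i ≠ j → star (v i) * v j = 0) ∧
      (∀ ξ : H, HasSum (fun i => v i (star (v i) ξ)) ξ) ∧
      (∀ (x : H →L[ℂ] H) (ξ : H), HasSum (fun i => v i (x (star (v i) ξ))) (ρ x ξ)) :=
  endomorphism_of_BH_is_inner_general ρ hnormal
end

section
/- Let α : Mat_n(ℂ) → Mat_m(ℂ) be a completely positive unital map and φ a faithful state on Mat_m(ℂ). Then there is a unique completely positive unital map α' : Mat_m(ℂ) → Mat_n(ℂ) (the φ-transpose of α) satisfying ⟨α(x), y⟩_φ = ⟨α'(y), x⟩_ψ for all x ∈ Mat_n(ℂ), y ∈ Mat_m(ℂ), where ψ = φ ∘ α and ⟨a, b⟩_ω = Tr(ρ_ω^{1/2} a ρ_ω^{1/2} b) with ρ_ω the density matrix of the state ω. -/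
/-!
The trace pairing `(x, y) ↦ tr (x y)` gives every linear map `α` a dual `α†`, and the Choi matrix
of `α†` is a permuted transpose of that of `α`, so `α†` is completely positive by Choi's theorem.
With `R = ρ_φ^{1/2}` and `T = ρ_ψ^{1/2}`, the `φ`-transpose is `y ↦ T⁻¹ α†(R y R) T⁻¹`, a
composite of completely positive maps. It is unital because `ψ = φ ∘ α` says exactly
`α† ρ_φ = ρ_ψ`, and unique because `T` is invertible and the trace pairing is nondegenerate.
-/

open Matrix
open scoped ComplexOrder Kronecker

/-- The positive semidefinite square root of a positive semidefinite matrix, as it was defined in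
Mathlib (`Matrix.PosSemidef.sqrt`, since removed). -/
noncomputable def Matrix.PosSemidef.sqrt {n 𝕜 : Type*} [Fintype n] [DecidableEq n] [RCLike 𝕜]
    {A : Matrix n n 𝕜} (hA : A.PosSemidef) : Matrix n n 𝕜 :=
  (hA.1.eigenvectorUnitary : Matrix n n 𝕜) *
    diagonal ((↑) ∘ (Real.sqrt ·) ∘ hA.1.eigenvalues) *
    (star hA.1.eigenvectorUnitary : Matrix n n 𝕜)

/-- Complete positivity for a linear map between matrix algebras: for every `k`, the
amplified map preserves positive semidefiniteness. -/
def IsCompletelyPositiveM {n m : ℕ}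
    (α : Matrix (Fin n) (Fin n) ℂ →ₗ[ℂ] Matrix (Fin m) (Fin m) ℂ) : Prop :=
  ∀ (k : ℕ) (M : Matrix (Fin k × Fin n) (Fin k × Fin n) ℂ), M.PosSemidef →
    (Matrix.of fun p q : Fin k × Fin m =>
      α (Matrix.of fun a b => M (p.1, a) (q.1, b)) p.2 q.2).PosSemidef

namespace Matrix

section sqrt

variable {n 𝕜 : Type*} [Fintype n] [DecidableEq n] [RCLike 𝕜] {A : Matrix n n 𝕜}

lemma PosSemidef.posSemidef_sqrt (hA : A.PosSemidef) : hA.sqrt.PosSemidef :=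
  (posSemidef_diagonal_iff.mpr fun _ => RCLike.ofReal_nonneg.mpr (Real.sqrt_nonneg _)
    ).mul_mul_conjTranspose_same _

lemma PosSemidef.sqrt_mul_self (hA : A.PosSemidef) : hA.sqrt * hA.sqrt = A := by
  conv_rhs => rw [hA.1.spectral_theorem]
  rw [PosSemidef.sqrt, ← Unitary.conjStarAlgAut_apply (S := 𝕜), ← map_mul,
    diagonal_mul_diagonal]
  congr 2
  funext i
  simp [← RCLike.ofReal_mul, Real.mul_self_sqrt (hA.eigenvalues_nonneg i)]

lemma PosDef.isUnit_sqrt (hA : A.PosDef) : IsUnit hA.posSemidef.sqrt := by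
  have h := hA.isUnit
  rw [← hA.posSemidef.sqrt_mul_self, isUnit_iff_isUnit_det, det_mul] at h
  exact (isUnit_iff_isUnit_det _).mpr (isUnit_of_mul_isUnit_left h)

end sqrt

section choi

variable {K ι κ : Type*} [CommSemiring K] [Fintype ι] [DecidableEq ι]

omit [Fintype ι] in
lemma single_eq_smul_single_one (a b : ι) (c : K) : single a b c = c • single a b 1 := by
  rw [smul_single, smul_eq_mul, mul_one]

def choiMatrix (β : Matrix ι ι K →ₗ[K] Matrix κ κ K) : Matrix (ι × κ) (ι × κ) K :=
  of fun u v => β (single u.1 v.1 1) u.2 v.2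

lemma apply_eq_sum_choiMatrix (β : Matrix ι ι K →ₗ[K] Matrix κ κ K) (x : Matrix ι ι K)
    (i j : κ) : β x i j = ∑ a, ∑ b, x a b * choiMatrix β (a, i) (b, j) := by
  conv_lhs => rw [matrix_eq_sum_single x]
  simp only [map_sum, sum_apply]
  refine Finset.sum_congr rfl fun a _ => Finset.sum_congr rfl fun b _ => ?_
  rw [single_eq_smul_single_one, map_smul]
  rfl

variable [Fintype κ] [DecidableEq κ]

def traceDual (α : Matrix ι ι K →ₗ[K] Matrix κ κ K) : Matrix κ κ K →ₗ[K] Matrix ι ι K where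
  toFun y := of fun a b => (α (single b a 1) * y).trace
  map_add' y z := by ext; simp [Matrix.mul_add]
  map_smul' c y := by ext; simp

lemma trace_mul_traceDual (α : Matrix ι ι K →ₗ[K] Matrix κ κ K) (x : Matrix ι ι K)
    (y : Matrix κ κ K) : (x * traceDual α y).trace = (α x * y).trace := by
  induction x using Matrix.induction_on' with
  | h_zero => simp
  | h_add p q hp hq => simp only [Matrix.add_mul, trace_add, map_add, hp, hq]
  | h_std_basis i j c =>
    rw [trace_single_mul, single_eq_smul_single_one i j c, map_smul, smul_mul, trace_smul]
    rfl

lemma traceDual_apply_eq_of_trace_mul_eq {α : Matrix ι ι K →ₗ[K] Matrix κ κ K} {ρ : Matrix κ κ K}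
    {σ : Matrix ι ι K} (h : ∀ x, (σ * x).trace = (ρ * α x).trace) : traceDual α ρ = σ := by
  rw [ext_iff_trace_mul_left]
  intro x
  rw [trace_mul_traceDual, trace_mul_comm, ← h, trace_mul_comm]

omit [Fintype ι] in
lemma choiMatrix_traceDual (α : Matrix ι ι K →ₗ[K] Matrix κ κ K) :
    choiMatrix (traceDual α) = (choiMatrix α)ᵀ.submatrix Prod.swap Prod.swap := by
  ext ⟨i, a⟩ ⟨j, b⟩
  change (α (single b a 1) * single i j 1).trace = _
  rw [trace_mul_single]
  simp [choiMatrix]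

end choi

section conjMap

variable {K ι : Type*} [CommSemiring K] [StarRing K] [Fintype ι] [DecidableEq ι]

def conjMap (A : Matrix ι ι K) : Matrix ι ι K →ₗ[K] Matrix ι ι K :=
  LinearMap.mulLeft K A ∘ₗ LinearMap.mulRight K Aᴴ

@[simp]
lemma conjMap_apply (A x : Matrix ι ι K) : conjMap A x = A * x * Aᴴ := by
  simp [conjMap, Matrix.mul_assoc]

lemma choiMatrix_conjMap (A : Matrix ι ι K) :
    choiMatrix (conjMap A) = vecMulVec (fun u => A u.2 u.1) (star fun u => A u.2 u.1) := by
  ext ⟨a, i⟩ ⟨b, j⟩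
  simp [choiMatrix, vecMulVec_apply, mul_apply, single_apply, ite_and]

end conjMap

end Matrix

section transpose

variable {K ι κ : Type*} [CommRing K] [StarRing K] [Fintype ι] [DecidableEq ι] [Fintype κ]
  [DecidableEq κ]

noncomputable def sandwichTranspose (α : Matrix ι ι K →ₗ[K] Matrix κ κ K) (R : Matrix κ κ K)
    (T : Matrix ι ι K) : Matrix κ κ K →ₗ[K] Matrix ι ι K :=
  conjMap T⁻¹ ∘ₗ traceDual α ∘ₗ conjMap R

variable {α : Matrix ι ι K →ₗ[K] Matrix κ κ K} {R : Matrix κ κ K} {T : Matrix ι ι K}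

lemma mul_sandwichTranspose_mul (hT : Tᴴ = T) (hTu : IsUnit T) (y : Matrix κ κ K) :
    T * sandwichTranspose α R T y * T = traceDual α (R * y * Rᴴ) := by
  have hT₁ : T * T⁻¹ = 1 := mul_nonsing_inv T ((isUnit_iff_isUnit_det T).mp hTu)
  have hT₂ : T⁻¹ * T = 1 := nonsing_inv_mul T ((isUnit_iff_isUnit_det T).mp hTu)
  simp only [sandwichTranspose, LinearMap.comp_apply, conjMap_apply, conjTranspose_nonsing_inv,
    hT, ← Matrix.mul_assoc, hT₁, Matrix.one_mul]
  rw [Matrix.mul_assoc _ T⁻¹ T, hT₂, Matrix.mul_one]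

lemma trace_mul_sandwichTranspose_mul_mul (hR : Rᴴ = R) (hT : Tᴴ = T) (hTu : IsUnit T)
    (x : Matrix ι ι K) (y : Matrix κ κ K) :
    (T * sandwichTranspose α R T y * T * x).trace = (R * α x * R * y).trace := by
  rw [mul_sandwichTranspose_mul hT hTu, trace_mul_comm, trace_mul_traceDual, hR]
  simp only [Matrix.mul_assoc]
  rw [trace_mul_comm R]
  simp only [Matrix.mul_assoc]

lemma sandwichTranspose_one (hR : Rᴴ = R) (hT : Tᴴ = T) (hTu : IsUnit T)
    (h : traceDual α (R * R) = T * T) : sandwichTranspose α R T 1 = 1 :=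
  hTu.mul_left_cancel <| hTu.mul_right_cancel <| by
    rw [mul_sandwichTranspose_mul hT hTu, Matrix.mul_one, hR, h, Matrix.mul_one]

end transpose

section completelyPositive

variable {n m l : ℕ}

lemma IsCompletelyPositiveM.comp {γ : Matrix (Fin n) (Fin n) ℂ →ₗ[ℂ] Matrix (Fin m) (Fin m) ℂ}
    {β : Matrix (Fin m) (Fin m) ℂ →ₗ[ℂ] Matrix (Fin l) (Fin l) ℂ}
    (hβ : IsCompletelyPositiveM β) (hγ : IsCompletelyPositiveM γ) :
    IsCompletelyPositiveM (β ∘ₗ γ) :=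
  fun k M hM => hβ k _ (hγ k M hM)

lemma IsCompletelyPositiveM.posSemidef_choiMatrix
    {α : Matrix (Fin n) (Fin n) ℂ →ₗ[ℂ] Matrix (Fin m) (Fin m) ℂ} (hα : IsCompletelyPositiveM α) :
    (choiMatrix α).PosSemidef := by
  let w : Fin n × Fin n → ℂ := fun u => if u.1 = u.2 then 1 else 0
  have hw : ∀ s t : Fin n, (of fun a b => vecMulVec w (star w) (s, a) (t, b)) = single s t 1 := by
    intro s t
    ext a b
    by_cases hs : s = a <;> by_cases ht : t = b <;> simp [w, vecMulVec_apply, hs, ht]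
  have h := hα n _ (posSemidef_vecMulVec_self_star w)
  simp only [hw] at h
  exact h

lemma isCompletelyPositiveM_of_posSemidef_choiMatrix
    {α : Matrix (Fin n) (Fin n) ℂ →ₗ[ℂ] Matrix (Fin m) (Fin m) ℂ}
    (hα : (choiMatrix α).PosSemidef) : IsCompletelyPositiveM α := by
  intro k M hM
  let V : Matrix ((Fin k × Fin n) × (Fin n × Fin m)) (Fin k × Fin m) ℂ :=
    of fun u v => if u.1.1 = v.1 ∧ u.1.2 = u.2.1 ∧ u.2.2 = v.2 then 1 else 0
  have hV : (of fun p q : Fin k × Fin m => α (of fun a b => M (p.1, a) (q.1, b)) p.2 q.2) =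
      Vᴴ * (M ⊗ₖ choiMatrix α) * V := by
    ext ⟨s, i⟩ ⟨t, j⟩
    simp only [V, apply_eq_sum_choiMatrix α, of_apply, ite_and, mul_apply, conjTranspose_apply,
      RCLike.star_def, apply_ite (starRingEnd ℂ), map_one, map_zero, kroneckerMap_apply, ite_mul,
      one_mul, zero_mul, Fintype.sum_prod_type, Finset.sum_ite_irrel, Finset.sum_ite_eq',
      Finset.mem_univ, ↓reduceIte, Finset.sum_const_zero, Finset.sum_ite_eq, mul_ite, mul_one,
      mul_zero]
    exact Finset.sum_comm
  rw [hV]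
  exact (hM.kronecker hα).conjTranspose_mul_mul_same V

lemma IsCompletelyPositiveM.traceDual
    {α : Matrix (Fin n) (Fin n) ℂ →ₗ[ℂ] Matrix (Fin m) (Fin m) ℂ} (hα : IsCompletelyPositiveM α) :
    IsCompletelyPositiveM (traceDual α) := by
  apply isCompletelyPositiveM_of_posSemidef_choiMatrix
  rw [choiMatrix_traceDual]
  exact hα.posSemidef_choiMatrix.transpose.submatrix _

lemma isCompletelyPositiveM_conjMap (A : Matrix (Fin n) (Fin n) ℂ) :
    IsCompletelyPositiveM (conjMap A) := by
  apply isCompletelyPositiveM_of_posSemidef_choiMatrix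
  rw [choiMatrix_conjMap]
  exact posSemidef_vecMulVec_self_star _

lemma IsCompletelyPositiveM.sandwichTranspose
    {α : Matrix (Fin n) (Fin n) ℂ →ₗ[ℂ] Matrix (Fin m) (Fin m) ℂ} (hα : IsCompletelyPositiveM α)
    (R : Matrix (Fin m) (Fin m) ℂ) (T : Matrix (Fin n) (Fin n) ℂ) :
    IsCompletelyPositiveM (sandwichTranspose α R T) :=
  (isCompletelyPositiveM_conjMap _).comp (hα.traceDual.comp (isCompletelyPositiveM_conjMap R))

end completelyPositive

theorem transpose_channel_exists_unique_general {n m : ℕ}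
    (α : Matrix (Fin n) (Fin n) ℂ →ₗ[ℂ] Matrix (Fin m) (Fin m) ℂ)
    (hCP : IsCompletelyPositiveM α)
    {Rφ : Matrix (Fin m) (Fin m) ℂ} (hRφ : Rφ.PosDef)
    {S : Matrix (Fin n) (Fin n) ℂ} (hS : S.PosDef)
    (hdens : ∀ x : Matrix (Fin n) (Fin n) ℂ, (S * x).trace = (Rφ * α x).trace) :
    ∃! α' : Matrix (Fin m) (Fin m) ℂ →ₗ[ℂ] Matrix (Fin n) (Fin n) ℂ,
      (α' 1 = 1 ∧ IsCompletelyPositiveM α') ∧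
      ∀ (x : Matrix (Fin n) (Fin n) ℂ) (y : Matrix (Fin m) (Fin m) ℂ),
        (hRφ.posSemidef.sqrt * α x * hRφ.posSemidef.sqrt * y).trace =
          (hS.posSemidef.sqrt * α' y * hS.posSemidef.sqrt * x).trace := by
  set R := hRφ.posSemidef.sqrt
  set T := hS.posSemidef.sqrt
  have hR : Rᴴ = R := hRφ.posSemidef.posSemidef_sqrt.isHermitian
  have hT : Tᴴ = T := hS.posSemidef.posSemidef_sqrt.isHermitian
  have hTu : IsUnit T := hS.isUnit_sqrt
  have hpair x y := (trace_mul_sandwichTranspose_mul_mul (α := α) hR hT hTu x y).symm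
  refine ⟨sandwichTranspose α R T, ⟨⟨?_, hCP.sandwichTranspose R T⟩, hpair⟩, fun β hβ => ?_⟩
  · refine sandwichTranspose_one hR hT hTu ?_
    rw [hRφ.posSemidef.sqrt_mul_self, hS.posSemidef.sqrt_mul_self]
    exact traceDual_apply_eq_of_trace_mul_eq hdens
  · ext y : 1
    refine hTu.mul_left_cancel (hTu.mul_right_cancel ?_)
    rw [ext_iff_trace_mul_right]
    intro x
    rw [← hβ.2 x y, hpair]

/-- Existence and uniqueness of the `φ`-transpose of a completely positive unital map
`α : Mat_n(ℂ) → Mat_m(ℂ)`: with `φ` faithful of density matrix `Rφ`, `ψ = φ ∘ α` of density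
matrix `S`, there is a unique completely positive unital `α' : Mat_m(ℂ) → Mat_n(ℂ)` with
`⟨α(x), y⟩_φ = ⟨α'(y), x⟩_ψ`, where `⟨a, b⟩_ω = Tr(ρ_ω^{1/2} a ρ_ω^{1/2} b)`. -/
theorem transpose_channel_exists_unique {n m : ℕ}
    (α : Matrix (Fin n) (Fin n) ℂ →ₗ[ℂ] Matrix (Fin m) (Fin m) ℂ)
    (hunital : α 1 = 1) (hCP : IsCompletelyPositiveM α)
    {Rφ : Matrix (Fin m) (Fin m) ℂ} (hRφ : Rφ.PosDef) (hRφt : Rφ.trace = 1)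
    {S : Matrix (Fin n) (Fin n) ℂ} (hS : S.PosDef) (hSt : S.trace = 1)
    (hdens : ∀ x : Matrix (Fin n) (Fin n) ℂ, (S * x).trace = (Rφ * α x).trace) :
    ∃! α' : Matrix (Fin m) (Fin m) ℂ →ₗ[ℂ] Matrix (Fin n) (Fin n) ℂ,
      (α' 1 = 1 ∧ IsCompletelyPositiveM α') ∧
      ∀ (x : Matrix (Fin n) (Fin n) ℂ) (y : Matrix (Fin m) (Fin m) ℂ),
        (hRφ.posSemidef.sqrt * α x * hRφ.posSemidef.sqrt * y).trace =
          (hS.posSemidef.sqrt * α' y * hS.posSemidef.sqrt * x).trace :=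
  transpose_channel_exists_unique_general α hCP hRφ hS hdens
end

section
/- Let φ be a faithful state on Mat_m(ℂ) and α : Mat_n(ℂ) → Mat_m(ℂ) a completely positive unital map. Define the sesquilinear form on Mat_n(ℂ) ⊗ Mat_m(ℂ) by extending φ̃(x ⊗ y) = ⟨α(x), y⟩_φ = Tr(ρ^{1/2} α(x) ρ^{1/2} y) linearly, where ρ is the density matrix of φ. Then φ̃ is a positive linear functional on the C*-algebra Mat_n(ℂ) ⊗ Mat_m(ℂ)^{op}. -/
open Matrix TensorProduct
open scoped ComplexOrder

/-- The functional `φ̃` on `Mat_n(ℂ) ⊗ Mat_m(ℂ)ᵒᵖ` determined by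
`φ̃(x ⊗ yᵒᵖ) = ⟨α(x), y⟩_φ = Tr(ρ^{1/2} α(x) ρ^{1/2} y)`, where `s = ρ^{1/2}`. -/
noncomputable def pairingFunctional {n m : ℕ}
    (α : Matrix (Fin n) (Fin n) ℂ →ₗ[ℂ] Matrix (Fin m) (Fin m) ℂ)
    (s : Matrix (Fin m) (Fin m) ℂ) :
    TensorProduct ℂ (Matrix (Fin n) (Fin n) ℂ) (Matrix (Fin m) (Fin m) ℂ)ᵐᵒᵖ →ₗ[ℂ] ℂ :=
  TensorProduct.lift
    (LinearMap.mk₂ ℂ (fun x y => (s * α x * s * y.unop).trace)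
      (by intros; simp [Matrix.add_mul, Matrix.mul_add, Matrix.trace_add, Matrix.mul_smul,
        Matrix.smul_mul, Matrix.trace_smul, MulOpposite.unop_add, MulOpposite.unop_smul])
      (by intros; simp [Matrix.add_mul, Matrix.mul_add, Matrix.trace_add, Matrix.mul_smul,
        Matrix.smul_mul, Matrix.trace_smul, MulOpposite.unop_add, MulOpposite.unop_smul])
      (by intros; simp [Matrix.add_mul, Matrix.mul_add, Matrix.trace_add, Matrix.mul_smul,
        Matrix.smul_mul, Matrix.trace_smul, MulOpposite.unop_add, MulOpposite.unop_smul])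
      (by intros; simp [Matrix.add_mul, Matrix.mul_add, Matrix.trace_add, Matrix.mul_smul,
        Matrix.smul_mul, Matrix.trace_smul, MulOpposite.unop_add, MulOpposite.unop_smul]))

/-!
Writing `s = ρ^{1/2}` and `z = Σᵢ xᵢ ⊗ yᵢᵒᵖ`, cyclicity of the trace gives
`φ̃(z* z) = Σᵢⱼ Tr((s yᵢ)ᴴ α(xᵢ* xⱼ) (s yⱼ)) = Tr(Bᴴ A B)`, where `A = [α(xᵢ* xⱼ)]ᵢⱼ` is a block
matrix and `B` is the block column with entries `s yᵢ`. The block matrix `[xᵢ* xⱼ]ᵢⱼ` is a Gram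
matrix, hence positive semidefinite, so `A` is positive semidefinite by complete positivity,
and so is `Bᴴ A B`; its trace is therefore a nonnegative real number.
-/

namespace Matrix

section Blocks

variable {ι l m n r R : Type*} [Fintype ι] [Fintype l] [Fintype m] [Fintype n] [Fintype r]

theorem trace_conjTranspose_mul_mul_eq_sum_blocks [CommRing R] [StarRing R]
    (A : Matrix (ι × m) (ι × m) R) (w : ι → Matrix m r R) :
    ((of fun (p : ι × m) c => w p.1 p.2 c)ᴴ * A * of fun (p : ι × m) c => w p.1 p.2 c).trace =
      ∑ i, ∑ j, ((w i)ᴴ * of (fun a b => A (i, a) (j, b)) * w j).trace := by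
  simp only [trace, diag, mul_apply, conjTranspose_apply, of_apply, Fintype.sum_prod_type,
    Finset.sum_mul]
  rw [Finset.sum_comm]
  conv_rhs => rw [Finset.sum_comm]
  exact Finset.sum_congr rfl fun j _ =>
    (Finset.sum_congr rfl fun c _ => Finset.sum_comm).trans Finset.sum_comm

variable [CommRing R] [PartialOrder R] [StarRing R] [StarOrderedRing R]

theorem PosSemidef.sum_trace_blocks_nonneg {A : Matrix (ι × m) (ι × m) R} (hA : A.PosSemidef)
    (w : ι → Matrix m r R) :
    0 ≤ ∑ i, ∑ j, ((w i)ᴴ * of (fun a b => A (i, a) (j, b)) * w j).trace :=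
  trace_conjTranspose_mul_mul_eq_sum_blocks A w ▸
    (hA.conjTranspose_mul_mul_same _).trace_nonneg

theorem posSemidef_blockGram (x : ι → Matrix l n R) :
    (of fun p q : ι × n => ((x p.1)ᴴ * x q.1) p.2 q.2).PosSemidef := by
  have hgram : (of fun p q : ι × n => ((x p.1)ᴴ * x q.1) p.2 q.2) =
      (of fun c (p : ι × n) => x p.1 c p.2)ᴴ * of fun c (p : ι × n) => x p.1 c p.2 := by
    ext p q
    simp [mul_apply]
  exact hgram ▸ posSemidef_conjTranspose_mul_self _

end Blocks

theorem trace_mul_mul_mul_mul_conjTranspose {m R : Type*} [Fintype m] [CommRing R] [StarRing R]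
    {s : Matrix m m R} (hs : s.IsHermitian) (a y z : Matrix m m R) :
    (s * a * s * (y * zᴴ)).trace = ((s * z)ᴴ * a * (s * y)).trace := by
  rw [conjTranspose_mul, hs.eq, ← mul_assoc, trace_mul_comm]
  simp only [mul_assoc]

end Matrix

theorem IsCompletelyPositiveM.posSemidef_map_blockGram {n m k : ℕ}
    {α : Matrix (Fin n) (Fin n) ℂ →ₗ[ℂ] Matrix (Fin m) (Fin m) ℂ} (hCP : IsCompletelyPositiveM α)
    (x : Fin k → Matrix (Fin n) (Fin n) ℂ) :
    (of fun p q : Fin k × Fin m => α (star (x p.1) * x q.1) p.2 q.2).PosSemidef :=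
  hCP k _ (Matrix.posSemidef_blockGram x)

theorem pairingFunctional_sum_star_mul {n m k : ℕ}
    (α : Matrix (Fin n) (Fin n) ℂ →ₗ[ℂ] Matrix (Fin m) (Fin m) ℂ)
    {s : Matrix (Fin m) (Fin m) ℂ} (hs : s.IsHermitian)
    (x : Fin k → Matrix (Fin n) (Fin n) ℂ) (y : Fin k → Matrix (Fin m) (Fin m) ℂ) :
    pairingFunctional α s (∑ i, ∑ j, (star (x i) * x j) ⊗ₜ[ℂ] MulOpposite.op (y j * star (y i))) =
      ∑ i, ∑ j, ((s * y i)ᴴ * α (star (x i) * x j) * (s * y j)).trace := by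
  simp [pairingFunctional, map_sum, star_eq_conjTranspose, trace_mul_mul_mul_mul_conjTranspose hs]

theorem pairing_functional_positive_general {n m : ℕ}
    (α : Matrix (Fin n) (Fin n) ℂ →ₗ[ℂ] Matrix (Fin m) (Fin m) ℂ)
    (hCP : IsCompletelyPositiveM α)
    {ρ : Matrix (Fin m) (Fin m) ℂ} (hρ : ρ.PosDef)
    (k : ℕ) (x : Fin k → Matrix (Fin n) (Fin n) ℂ) (y : Fin k → Matrix (Fin m) (Fin m) ℂ) :
    0 ≤ (pairingFunctional α (hρ.posSemidef.1.eigenvectorUnitary.1 *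
        diagonal (((↑) : ℝ → ℂ) ∘ Real.sqrt ∘ hρ.posSemidef.1.eigenvalues) *
        (star hρ.posSemidef.1.eigenvectorUnitary : Matrix (Fin m) (Fin m) ℂ))
        (∑ i, ∑ j, (star (x i) * x j) ⊗ₜ[ℂ] MulOpposite.op (y j * star (y i)))).re ∧
      (pairingFunctional α (hρ.posSemidef.1.eigenvectorUnitary.1 *
        diagonal (((↑) : ℝ → ℂ) ∘ Real.sqrt ∘ hρ.posSemidef.1.eigenvalues) *
        (star hρ.posSemidef.1.eigenvectorUnitary : Matrix (Fin m) (Fin m) ℂ))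
        (∑ i, ∑ j, (star (x i) * x j) ⊗ₜ[ℂ] MulOpposite.op (y j * star (y i)))).im = 0 := by
  have hs : (hρ.posSemidef.1.eigenvectorUnitary.1 *
      diagonal (((↑) : ℝ → ℂ) ∘ Real.sqrt ∘ hρ.posSemidef.1.eigenvalues) *
      (star hρ.posSemidef.1.eigenvectorUnitary : Matrix (Fin m) (Fin m) ℂ)).IsHermitian :=
    isHermitian_mul_mul_conjTranspose _ (isHermitian_diagonal_of_self_adjoint _ (by ext; simp))
  rw [pairingFunctional_sum_star_mul α hs]
  obtain ⟨hre, him⟩ := Complex.nonneg_iff.mp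
    ((hCP.posSemidef_map_blockGram x).sum_trace_blocks_nonneg fun i => _ * y i)
  exact ⟨hre, him.symm⟩

/-- Finite-dimensional instance of the construction of the bimodule of a channel: for a
completely positive unital `α : Mat_n(ℂ) → Mat_m(ℂ)` and a faithful state `φ` with density
matrix `ρ`, the functional `φ̃(x ⊗ yᵒᵖ) = Tr(ρ^{1/2} α(x) ρ^{1/2} y)` is a positive linear
functional on `Mat_n(ℂ) ⊗ Mat_m(ℂ)ᵒᵖ`: it is nonnegative on every element of the form
`z* z`, `z = Σ_i x_i ⊗ (y_i)ᵒᵖ` (so that `z* z = Σ_{i,j} (x_i* x_j) ⊗ (y_j y_i*)ᵒᵖ`). -/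
theorem pairing_functional_positive {n m : ℕ}
    (α : Matrix (Fin n) (Fin n) ℂ →ₗ[ℂ] Matrix (Fin m) (Fin m) ℂ)
    (hunital : α 1 = 1) (hCP : IsCompletelyPositiveM α)
    {ρ : Matrix (Fin m) (Fin m) ℂ} (hρ : ρ.PosDef) (htr : ρ.trace = 1)
    (k : ℕ) (x : Fin k → Matrix (Fin n) (Fin n) ℂ) (y : Fin k → Matrix (Fin m) (Fin m) ℂ) :
    0 ≤ (pairingFunctional α (hρ.posSemidef.1.eigenvectorUnitary.1 *
        diagonal (((↑) : ℝ → ℂ) ∘ Real.sqrt ∘ hρ.posSemidef.1.eigenvalues) *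
        (star hρ.posSemidef.1.eigenvectorUnitary : Matrix (Fin m) (Fin m) ℂ))
        (∑ i, ∑ j, (star (x i) * x j) ⊗ₜ[ℂ] MulOpposite.op (y j * star (y i)))).re ∧
      (pairingFunctional α (hρ.posSemidef.1.eigenvectorUnitary.1 *
        diagonal (((↑) : ℝ → ℂ) ∘ Real.sqrt ∘ hρ.posSemidef.1.eigenvalues) *
        (star hρ.posSemidef.1.eigenvectorUnitary : Matrix (Fin m) (Fin m) ℂ))
        (∑ i, ∑ j, (star (x i) * x j) ⊗ₜ[ℂ] MulOpposite.op (y j * star (y i)))).im = 0 :=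
  pairing_functional_positive_general α hCP hρ k x y
end
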